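/- Let m ≥ 1 be an integer. Define Φ_{S4}(m,a,b;t) = 4π² cosh(t/4) (4 sinh²(t/(2m)) + 4a)^m (4 sinh²(t/(2m)) + 4b)^m e^{−2π cosh t}. Let δ = (4π²)^{−1} e^{2π} Φ(0) and γ = (16 Φ''(0) + (32π − 1) Φ(0)) / (128 Φ(0)), where Φ(0) = Σ_{n=1}^{∞} (2π² n⁴ − 3π n²) e^{−π n²} and Φ''(0) is the second derivative at 0 of the kernel Φ(t) = Σ_{n=1}^{∞} (2π² n⁴ e^{9t/4} − 3π n² e^{5t/4}) e^{−π n² e^t}. If a, b > 0 satisfy a + b = m γ δ^{1/m} and ab = (1/16) δ^{1/m}, then Φ_{S4}(m,a,b;0) = Φ(0) and (d²/dt²) Φ_{S4}(m,a,b;t) |_{t=0} = Φ''(0). -/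

import Mathlib

open Real

/-- The Riemann xi kernel
`Φ(t) = ∑_{n=1}^{∞} (2π² n⁴ e^{9t/4} − 3π n² e^{5t/4}) e^{−π n² e^t}`. -/
noncomputable def Phi (t : ℝ) : ℝ :=
  ∑' n : ℕ,
    (2 * π ^ 2 * (n + 1 : ℝ) ^ 4 * exp (9 * t / 4)
      - 3 * π * (n + 1 : ℝ) ^ 2 * exp (5 * t / 4)) * exp (-π * (n + 1 : ℝ) ^ 2 * exp t)

/-- The approximating kernel
`Φ_{S4}(m,a,b;t) = 4π² cosh(t/4)(4 sinh²(t/(2m)) + 4a)^m (4 sinh²(t/(2m)) + 4b)^m e^{−2π cosh t}`. -/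
noncomputable def PhiS4 (m : ℕ) (a b t : ℝ) : ℝ :=
  4 * π ^ 2 * cosh (t / 4) * (4 * sinh (t / (2 * m)) ^ 2 + 4 * a) ^ m *
    (4 * sinh (t / (2 * m)) ^ 2 + 4 * b) ^ m * exp (-2 * π * cosh t)

/-- `δ = (4π²)⁻¹ e^{2π} Φ(0)`. -/
noncomputable def deltaConst : ℝ := (4 * π ^ 2)⁻¹ * exp (2 * π) * Phi 0

/-- `γ = (16 Φ''(0) + (32π − 1) Φ(0)) / (128 Φ(0))`. -/
noncomputable def gammaConst : ℝ :=
  (16 * iteratedDeriv 2 Phi 0 + (32 * π - 1) * Phi 0) / (128 * Phi 0)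

/-! Writing `4 sinh²(t/(2m)) = 2 cosh(t/m) - 2`, the kernel `Φ_{S4}` is `4π²` times the
product of the even functions `cosh(t/4)`, `g(cosh(t/m))` with
`g(y) = ((2y - 2 + 4a)(2y - 2 + 4b))^m`, and `exp(-2π cosh t)`. Their first derivatives vanish
at `0`, so the second derivative of the product there is the sum over the factors of the second
derivative of one factor times the values of the others, and by the chain rule each inner second
derivative is that of a `cosh`. This gives `Φ_{S4}''(0) / Φ_{S4}(0) = 1/16 + (a + b)/(2abm) - 2π`.
Since `Φ(0) > 0` (each term of its series is positive), `δ > 0`, so `ab = δ^{1/m}/16` means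
`(16ab)^m = δ`, i.e. `Φ_{S4}(0) = 4π²e^{-2π}δ = Φ(0)`; then `a + b = mγ·16ab` turns the ratio
into `1/16 + 8γ - 2π`, which is `Φ''(0)/Φ(0)` by the definition of `γ`. -/

theorem Function.Even.deriv_zero {F : Type*} [NormedAddCommGroup F] [NormedSpace ℝ F]
    {f : ℝ → F} (hf : f.Even) : deriv f 0 = 0 := by
  have h : deriv f 0 = -deriv f 0 := by simpa [hf.eq] using iteratedDeriv_comp_neg 1 f 0
  rw [eq_neg_iff_add_eq_zero, ← two_smul ℝ, smul_eq_zero] at h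
  exact h.resolve_left two_ne_zero

section SecondDerivative

variable {𝕜 : Type*} [NontriviallyNormedField 𝕜]

theorem iteratedDeriv_two_mul_of_deriv_eq_zero {𝔸 : Type*} [NormedRing 𝔸] [NormedAlgebra 𝕜 𝔸]
    {f g : 𝕜 → 𝔸} {x : 𝕜} (hf : ContDiffAt 𝕜 2 f x) (hg : ContDiffAt 𝕜 2 g x)
    (hf' : deriv f x = 0) :
    iteratedDeriv 2 (fun t => f t * g t) x =
      iteratedDeriv 2 f x * g x + f x * iteratedDeriv 2 g x := by
  simp [iteratedDeriv_fun_mul hf hg, Finset.sum_range_succ, hf', add_comm]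

theorem iteratedDeriv_two_comp_of_deriv_eq_zero {g u : 𝕜 → 𝕜} {x : 𝕜} (hg : ContDiff 𝕜 2 g)
    (hu : ContDiff 𝕜 2 u) (hu' : deriv u x = 0) :
    iteratedDeriv 2 (fun t => g (u t)) x = deriv g (u x) * iteratedDeriv 2 u x := by
  have hdg : Differentiable 𝕜 (deriv g) := by simpa using hg.differentiable_iteratedDeriv' 1
  have hdu : Differentiable 𝕜 (deriv u) := by simpa using hu.differentiable_iteratedDeriv' 1
  have hd : deriv (fun t => g (u t)) = fun t => deriv g (u t) * deriv u t :=
    funext fun t =>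
      deriv_comp t (hg.differentiable two_ne_zero _) (hu.differentiable two_ne_zero t)
  have hdgu : DifferentiableAt 𝕜 (fun t => deriv g (u t)) x :=
    (hdg _).comp x (hu.differentiable two_ne_zero x)
  rw [iteratedDeriv_succ, iteratedDeriv_one, hd, deriv_fun_mul hdgu (hdu x), hu',
    iteratedDeriv_succ, iteratedDeriv_one]
  ring

end SecondDerivative

theorem Real.iteratedDeriv_two_cosh_div (c x : ℝ) :
    iteratedDeriv 2 (fun t => cosh (t / c)) x = cosh (x / c) / c ^ 2 := by
  simp only [div_eq_inv_mul _ c, iteratedDeriv_comp_const_mul contDiff_cosh c⁻¹]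
  simp [div_eq_inv_mul]

theorem Real.deriv_cosh_div_zero (c : ℝ) : deriv (fun t => cosh (t / c)) 0 = 0 :=
  Function.Even.deriv_zero fun t => by simp [neg_div]

theorem Real.four_mul_sinh_half_sq (x : ℝ) : 4 * sinh (x / 2) ^ 2 = 2 * cosh x - 2 := by
  have h := cosh_two_mul (x / 2)
  rw [mul_div_cancel₀ x two_ne_zero, cosh_sq] at h
  linarith

lemma Phi_zero_eq_tsum :
    Phi 0 = ∑' n : ℕ, (2 * π ^ 2 * (n + 1 : ℝ) ^ 4 - 3 * π * (n + 1 : ℝ) ^ 2)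
      * exp (-π * (n + 1 : ℝ) ^ 2) := by
  simp [Phi]

lemma Phi_zero_pos : 0 < Phi 0 := by
  have hterm (n : ℕ) : 0 < (2 * π ^ 2 * (n + 1 : ℝ) ^ 4 - 3 * π * (n + 1 : ℝ) ^ 2)
      * exp (-π * (n + 1 : ℝ) ^ 2) := by
    have hn : (1 : ℝ) ≤ (n + 1 : ℝ) ^ 2 := one_le_pow₀ (by linarith [n.cast_nonneg (α := ℝ)])
    have h2π : 0 < 2 * π * (n + 1 : ℝ) ^ 2 - 3 := by nlinarith [pi_gt_three]
    have hfactor : 0 < π * (n + 1 : ℝ) ^ 2 * (2 * π * (n + 1 : ℝ) ^ 2 - 3) := by positivity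
    exact mul_pos (by linarith) (exp_pos _)
  have hsumm : Summable fun n : ℕ => (2 * π ^ 2 * (n + 1 : ℝ) ^ 4 - 3 * π * (n + 1 : ℝ) ^ 2)
      * exp (-π * (n + 1 : ℝ) ^ 2) := by
    have hdom :
        Summable fun n : ℕ => 2 * π ^ 2 * ((n + 1 : ℝ) ^ 4 * exp (-π * (n + 1 : ℝ))) := by
      refine Summable.mul_left _ ?_
      simpa using (summable_nat_add_iff 1).2 (summable_pow_mul_exp_neg_nat_mul 4 pi_pos)
    refine hdom.of_nonneg_of_le (fun n => (hterm n).le) fun n => ?_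
    have hn : (n + 1 : ℝ) ≤ (n + 1 : ℝ) ^ 2 := by nlinarith [n.cast_nonneg (α := ℝ)]
    have hπ := pi_pos
    rw [← mul_assoc]
    exact mul_le_mul (by nlinarith) (exp_le_exp.2 (by nlinarith)) (exp_pos _).le (by positivity)
  rw [Phi_zero_eq_tsum]
  exact hsumm.tsum_pos (fun n => (hterm n).le) 0 (hterm 0)

lemma Phi_zero_eq_deltaConst : Phi 0 = 4 * π ^ 2 * exp (-(2 * π)) * deltaConst := by
  rw [deltaConst]
  field_simp
  rw [mul_assoc, ← exp_add]
  simp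

lemma deltaConst_pos : 0 < deltaConst := by
  have := Phi_zero_pos
  rw [deltaConst]
  positivity

lemma iteratedDeriv_two_Phi_zero_eq_gammaConst :
    iteratedDeriv 2 Phi 0 = Phi 0 * (1 / 16 + 8 * gammaConst - 2 * π) := by
  rw [gammaConst]
  field_simp [Phi_zero_pos.ne']
  ring

lemma PhiS4_eq (m : ℕ) (a b t : ℝ) :
    PhiS4 m a b t = 4 * π ^ 2 * (cosh (t / 4) *
      (((2 * cosh (t / m) - 2 + 4 * a) * (2 * cosh (t / m) - 2 + 4 * b)) ^ m *
        exp (-2 * π * cosh t))) := by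
  rw [PhiS4, div_mul_eq_div_div_swap, four_mul_sinh_half_sq, mul_pow]
  ring

lemma PhiS4_zero (m : ℕ) (a b : ℝ) :
    PhiS4 m a b 0 = 4 * π ^ 2 * exp (-(2 * π)) * (16 * (a * b)) ^ m := by
  simp only [PhiS4_eq, zero_div, cosh_zero]
  ring_nf

lemma iteratedDeriv_two_PhiS4_zero {m : ℕ} (hm : m ≠ 0) (a b : ℝ) :
    iteratedDeriv 2 (fun t => PhiS4 m a b t) 0 = 4 * π ^ 2 * exp (-(2 * π)) *
      ((16 * (a * b)) ^ m / 16 + 8 * (a + b) * (16 * (a * b)) ^ (m - 1) / m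
        - 2 * π * (16 * (a * b)) ^ m) := by
  set g : ℝ → ℝ := fun y => ((2 * y - 2 + 4 * a) * (2 * y - 2 + 4 * b)) ^ m
  set h : ℝ → ℝ := fun y => exp (-2 * π * y)
  have hPhiS4 : (fun t => PhiS4 m a b t) =
      fun t => 4 * π ^ 2 * (cosh (t / 4) * (g (cosh (t / m)) * h (cosh t))) := by
    funext t; rw [PhiS4_eq]
  have hB : deriv (fun t => g (cosh (t / m))) 0 = 0 :=
    Function.Even.deriv_zero fun t => by simp [neg_div]
  have hg : HasDerivAt g (8 * m * (a + b) * (16 * (a * b)) ^ (m - 1)) 1 := by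
    have hlin (c : ℝ) : HasDerivAt (fun y : ℝ => 2 * y - 2 + c) 2 1 := by
      simpa using (((hasDerivAt_id (1 : ℝ)).const_mul 2).sub_const 2).add_const c
    exact (((hlin (4 * a)).fun_mul (hlin (4 * b))).fun_pow m).congr_deriv (by ring)
  have hh : HasDerivAt h (-2 * π * exp (-(2 * π))) 1 :=
    ((hasDerivAt_id' (1 : ℝ)).const_mul (-2 * π)).exp.congr_deriv (by ring_nf)
  have hcosh : iteratedDeriv 2 cosh 0 = 1 := by simp
  rw [hPhiS4, iteratedDeriv_const_mul_field,
    iteratedDeriv_two_mul_of_deriv_eq_zero (by fun_prop) (by fun_prop) (deriv_cosh_div_zero 4),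
    iteratedDeriv_two_mul_of_deriv_eq_zero (by fun_prop) (by fun_prop) hB,
    iteratedDeriv_two_comp_of_deriv_eq_zero (by fun_prop) (by fun_prop) (deriv_cosh_div_zero _),
    iteratedDeriv_two_comp_of_deriv_eq_zero (by fun_prop) contDiff_cosh (by simp),
    iteratedDeriv_two_cosh_div, iteratedDeriv_two_cosh_div]
  simp only [zero_div, cosh_zero, hcosh, hg.deriv, hh.deriv, g, h]
  field_simp
  ring

theorem PhiS4_matches_Phi_at_zero_general (m : ℕ) (hm : 1 ≤ m) (a b : ℝ)
    (hsum : a + b = m * gammaConst * deltaConst ^ ((1 : ℝ) / m))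
    (hprod : a * b = (1 / 16) * deltaConst ^ ((1 : ℝ) / m)) :
    PhiS4 m a b 0 = Phi 0 ∧
      iteratedDeriv 2 (fun t => PhiS4 m a b t) 0 = iteratedDeriv 2 Phi 0 := by
  have hm0 : m ≠ 0 := by omega
  have hroot : 16 * (a * b) = deltaConst ^ ((1 : ℝ) / m) := by rw [hprod]; ring
  have hpow : (16 * (a * b)) ^ m = deltaConst := by
    rw [hroot, ← rpow_natCast, ← rpow_mul deltaConst_pos.le,
      one_div_mul_cancel (Nat.cast_ne_zero.2 hm0), rpow_one]
  have hpred : (16 * (a * b)) ^ (m - 1) * (16 * (a * b)) = deltaConst := by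
    rw [← pow_succ, Nat.sub_add_cancel hm, hpow]
  have hsum' : a + b = m * gammaConst * (16 * (a * b)) := by rw [hsum, hroot]
  refine ⟨by rw [PhiS4_zero, hpow, Phi_zero_eq_deltaConst], ?_⟩
  rw [iteratedDeriv_two_PhiS4_zero hm0, iteratedDeriv_two_Phi_zero_eq_gammaConst,
    Phi_zero_eq_deltaConst, hpow, hsum']
  have hmid : 8 * (m * gammaConst * (16 * (a * b))) * (16 * (a * b)) ^ (m - 1) / m =
      8 * gammaConst * deltaConst := by
    rw [← hpred]
    field_simp
  rw [hmid]
  ring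

/-- **Theorem 4(B) of the paper.** For `m ≥ 1` and `a, b > 0` with `a + b = mγδ^{1/m}` and
`ab = (1/16)δ^{1/m}`, the kernel `Φ_{S4}(m,a,b;·)` matches both the value and the second
derivative of `Φ` at `t = 0`. -/
theorem PhiS4_matches_Phi_at_zero (m : ℕ) (hm : 1 ≤ m) (a b : ℝ)
    (ha : 0 < a) (hb : 0 < b)
    (hsum : a + b = m * gammaConst * deltaConst ^ ((1 : ℝ) / m))
    (hprod : a * b = (1 / 16) * deltaConst ^ ((1 : ℝ) / m)) :
    PhiS4 m a b 0 = Phi 0 ∧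
      iteratedDeriv 2 (fun t => PhiS4 m a b t) 0 = iteratedDeriv 2 Phi 0 :=
  PhiS4_matches_Phi_at_zero_general m hm a b hsum hprod
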